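/- Contraction step of the Alternating Block Algorithm: Let C₂ ∈ ℝ^{J×J} be symmetric positive definite with C₂ᵀC₂ equal to the symmetric part matrix C + (1/2)(reᵀ+erᵀ), and suppose x^{k+1}, x* ∈ ℝ^J satisfy 0 ≤ x^{k+1} ⟂ (C+reᵀ)x^{k+1} − s̄^k + a ≥ 0 and 0 ≤ x* ⟂ (C+reᵀ)x* − s̄* + a ≥ 0 for vectors s̄^k, s̄* ∈ ℝ^J. Then ‖C₂(x^{k+1} − x*)‖ ≤ ‖C₂^{-1}‖ · ‖s̄^k − s̄*‖. -/

import Mathlib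

open Matrix

/-- Euclidean norm of a vector in `ℝ^J`. -/
noncomputable def sqnorm {J : ℕ} (v : Fin J → ℝ) : ℝ := Real.sqrt (∑ i, (v i)^2)

/-- Spectral (operator 2-) norm of a matrix. -/
noncomputable def spec {J : ℕ} (A : Matrix (Fin J) (Fin J) ℝ) : ℝ :=
  sSup {c | ∃ v : Fin J → ℝ, sqnorm v ≤ 1 ∧ c = sqnorm (A.mulVec v)}

/-!
Subtracting the two complementarity conditions gives `dᵀ M d ≤ dᵀ (s̄ᵏ − s̄*)` for
`d = xᵏ⁺¹ − x*` and `M = C + reᵀ`. The quadratic form of `M` only sees its symmetric part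
`C₂ᵀC₂`, so the left side is `‖C₂ d‖²`, while Cauchy–Schwarz and `d = C₂⁻¹ (C₂ d)` bound the
right side by `‖C₂⁻¹‖ ‖C₂ d‖ ‖s̄ᵏ − s̄*‖`.
-/

section QuadraticForm

variable {n : Type*} [Fintype n]

theorem dotProduct_mulVec_sub_le_of_complementarity (M : Matrix n n ℝ) (a x y p q : n → ℝ)
    (hx : ∀ i, 0 ≤ x i) (hxf : ∀ i, 0 ≤ (M *ᵥ x - p + a) i) (hxc : x ⬝ᵥ (M *ᵥ x - p + a) = 0)
    (hy : ∀ i, 0 ≤ y i) (hyf : ∀ i, 0 ≤ (M *ᵥ y - q + a) i) (hyc : y ⬝ᵥ (M *ᵥ y - q + a) = 0) :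
    (x - y) ⬝ᵥ (M *ᵥ (x - y)) ≤ (x - y) ⬝ᵥ (p - q) := by
  have hxy : 0 ≤ x ⬝ᵥ (M *ᵥ y - q + a) := dotProduct_nonneg_of_nonneg hx hyf
  have hyx : 0 ≤ y ⬝ᵥ (M *ᵥ x - p + a) := dotProduct_nonneg_of_nonneg hy hxf
  have hexpand : (x - y) ⬝ᵥ (M *ᵥ (x - y)) - (x - y) ⬝ᵥ (p - q)
      = x ⬝ᵥ (M *ᵥ x - p + a) + y ⬝ᵥ (M *ᵥ y - q + a)
        - x ⬝ᵥ (M *ᵥ y - q + a) - y ⬝ᵥ (M *ᵥ x - p + a) := by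
    simp only [mulVec_sub, dotProduct_sub, sub_dotProduct, dotProduct_add]
    ring
  linarith

theorem dotProduct_mulVec_symmPart (A : Matrix n n ℝ) (x : n → ℝ) :
    x ⬝ᵥ ((1 / 2 : ℝ) • (A + Aᵀ)) *ᵥ x = x ⬝ᵥ A *ᵥ x := by
  rw [smul_mulVec, add_mulVec, dotProduct_smul, dotProduct_add, dotProduct_transpose_mulVec,
    smul_eq_mul]
  ring

theorem dotProduct_transpose_mul_self_mulVec (A : Matrix n n ℝ) (x : n → ℝ) :
    x ⬝ᵥ (Aᵀ * A) *ᵥ x = (A *ᵥ x) ⬝ᵥ (A *ᵥ x) := by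
  rw [← mulVec_mulVec, dotProduct_mulVec, vecMul_transpose]

end QuadraticForm

section EuclideanNorm

variable {J : ℕ}

theorem sqnorm_eq_norm_toLp (v : Fin J → ℝ) : sqnorm v = ‖WithLp.toLp 2 v‖ := by
  simp [EuclideanSpace.norm_eq, sqnorm]

theorem sqnorm_nonneg (v : Fin J → ℝ) : 0 ≤ sqnorm v := Real.sqrt_nonneg _

theorem dotProduct_self_eq_sqnorm_sq (v : Fin J → ℝ) : v ⬝ᵥ v = sqnorm v ^ 2 := by
  rw [sqnorm, Real.sq_sqrt (by positivity)]
  simp [dotProduct, pow_two]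

theorem dotProduct_le_sqnorm_mul_sqnorm (v w : Fin J → ℝ) : v ⬝ᵥ w ≤ sqnorm v * sqnorm w := by
  have hinner : v ⬝ᵥ w = inner ℝ (WithLp.toLp 2 v) (WithLp.toLp 2 w) := by
    simp [PiLp.inner_apply, dotProduct, mul_comm]
  rw [hinner, sqnorm_eq_norm_toLp, sqnorm_eq_norm_toLp]
  exact real_inner_le_norm _ _

theorem sqnorm_mulVec_le_opNorm (A : Matrix (Fin J) (Fin J) ℝ) (v : Fin J → ℝ) :
    sqnorm (A *ᵥ v) ≤ ‖toEuclideanCLM (𝕜 := ℝ) A‖ * sqnorm v := by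
  rw [sqnorm_eq_norm_toLp, sqnorm_eq_norm_toLp, ← toEuclideanCLM_toLp]
  exact (toEuclideanCLM (𝕜 := ℝ) A).le_opNorm _

theorem bddAbove_spec_set (A : Matrix (Fin J) (Fin J) ℝ) :
    BddAbove {c | ∃ v : Fin J → ℝ, sqnorm v ≤ 1 ∧ c = sqnorm (A *ᵥ v)} := by
  refine ⟨‖toEuclideanCLM (𝕜 := ℝ) A‖, ?_⟩
  rintro c ⟨v, hv, rfl⟩
  exact (sqnorm_mulVec_le_opNorm A v).trans
    (mul_le_of_le_one_right (norm_nonneg _) hv)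

theorem spec_nonneg (A : Matrix (Fin J) (Fin J) ℝ) : 0 ≤ spec A :=
  le_csSup (bddAbove_spec_set A) ⟨0, by simp [sqnorm], by simp [sqnorm]⟩

theorem sqnorm_mulVec_le_spec (A : Matrix (Fin J) (Fin J) ℝ) (v : Fin J → ℝ) :
    sqnorm (A *ᵥ v) ≤ spec A * sqnorm v := by
  rcases eq_or_lt_of_le (sqnorm_nonneg v) with hv | hv
  · have : v = 0 := by
      simpa [sqnorm_eq_norm_toLp] using hv.symm
    simp [this, sqnorm]
  · have hunit : sqnorm ((sqnorm v)⁻¹ • v) = 1 := by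
      rw [sqnorm_eq_norm_toLp, WithLp.toLp_smul, norm_smul, ← sqnorm_eq_norm_toLp,
        Real.norm_of_nonneg (inv_nonneg.mpr hv.le), inv_mul_cancel₀ hv.ne']
    have hle : sqnorm (A *ᵥ ((sqnorm v)⁻¹ • v)) ≤ spec A :=
      le_csSup (bddAbove_spec_set A) ⟨_, hunit.le, rfl⟩
    rw [mulVec_smul, sqnorm_eq_norm_toLp, WithLp.toLp_smul, norm_smul, ← sqnorm_eq_norm_toLp,
      Real.norm_of_nonneg (inv_nonneg.mpr hv.le), inv_mul_le_iff₀ hv] at hle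
    linarith

theorem sqnorm_le_spec_inv_mul (A : Matrix (Fin J) (Fin J) ℝ) (hA : IsUnit A.det)
    (v : Fin J → ℝ) : sqnorm v ≤ spec A⁻¹ * sqnorm (A *ᵥ v) := by
  simpa [mulVec_mulVec, nonsing_inv_mul _ hA] using sqnorm_mulVec_le_spec A⁻¹ (A *ᵥ v)

end EuclideanNorm

theorem symmPart_diagonal_add_vecMulVec_one {J : ℕ} (c r : Fin J → ℝ) :
    (1 / 2 : ℝ) • ((diagonal c + vecMulVec r 1) + (diagonal c + vecMulVec r 1)ᵀ)
      = diagonal c + (1 / 2 : ℝ) • (vecMulVec r 1 + vecMulVec 1 r) := by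
  rw [transpose_add, diagonal_transpose, transpose_vecMulVec]
  module

theorem stmt15_general {J : ℕ} (c r a : Fin J → ℝ)
    (C₂ : Matrix (Fin J) (Fin J) ℝ) (hC₂ : C₂.PosDef)
    (hC₂sq : C₂ᵀ * C₂ = Matrix.diagonal c +
      (1/2 : ℝ) • (Matrix.vecMulVec r 1 + Matrix.vecMulVec 1 r))
    (x1 xstar sk ss : Fin J → ℝ)
    (h1pos : ∀ i, 0 ≤ x1 i)
    (h1feas : ∀ i, 0 ≤ ((Matrix.diagonal c + Matrix.vecMulVec r 1).mulVec x1 - sk + a) i)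
    (h1comp : x1 ⬝ᵥ ((Matrix.diagonal c + Matrix.vecMulVec r 1).mulVec x1 - sk + a) = 0)
    (hspos : ∀ i, 0 ≤ xstar i)
    (hsfeas : ∀ i,
      0 ≤ ((Matrix.diagonal c + Matrix.vecMulVec r 1).mulVec xstar - ss + a) i)
    (hscomp :
      xstar ⬝ᵥ ((Matrix.diagonal c + Matrix.vecMulVec r 1).mulVec xstar - ss + a) = 0) :
    sqnorm (C₂.mulVec (x1 - xstar)) ≤ spec C₂⁻¹ * sqnorm (sk - ss) := by
  set d := x1 - xstar
  have hcomp := dotProduct_mulVec_sub_le_of_complementarity _ a x1 xstar sk ss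
    h1pos h1feas h1comp hspos hsfeas hscomp
  have hquad : d ⬝ᵥ (diagonal c + vecMulVec r 1) *ᵥ d = sqnorm (C₂ *ᵥ d) ^ 2 := by
    rw [← dotProduct_mulVec_symmPart, symmPart_diagonal_add_vecMulVec_one, ← hC₂sq,
      dotProduct_transpose_mul_self_mulVec, dotProduct_self_eq_sqnorm_sq]
  have hkey : sqnorm (C₂ *ᵥ d) * sqnorm (C₂ *ᵥ d)
      ≤ sqnorm (C₂ *ᵥ d) * (spec C₂⁻¹ * sqnorm (sk - ss)) :=
    calc sqnorm (C₂ *ᵥ d) * sqnorm (C₂ *ᵥ d)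
        = d ⬝ᵥ (diagonal c + vecMulVec r 1) *ᵥ d := by rw [hquad, sq]
      _ ≤ d ⬝ᵥ (sk - ss) := hcomp
      _ ≤ sqnorm d * sqnorm (sk - ss) := dotProduct_le_sqnorm_mul_sqnorm d (sk - ss)
      _ ≤ spec C₂⁻¹ * sqnorm (C₂ *ᵥ d) * sqnorm (sk - ss) :=
        mul_le_mul_of_nonneg_right
          (sqnorm_le_spec_inv_mul C₂ (isUnit_iff_ne_zero.mpr hC₂.det_pos.ne') d)
          (sqnorm_nonneg _)
      _ = _ := by ring
  rcases (sqnorm_nonneg (C₂ *ᵥ d)).eq_or_lt with hzero | hpos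
  · rw [← hzero]
    exact mul_nonneg (spec_nonneg _) (sqnorm_nonneg _)
  · exact le_of_mul_le_mul_left hkey hpos

/-- contraction step of the ABA. If `C₂ᵀC₂` equals the symmetric part
`C + (1/2)(reᵀ + erᵀ)` with `C₂` symmetric positive definite, and `x^{k+1}`, `x*`
solve the two complementarity problems, then
`‖C₂(x^{k+1} − x*)‖ ≤ ‖C₂⁻¹‖ ‖s̄^k − s̄*‖`. -/
theorem stmt15 {J : ℕ} (c r a : Fin J → ℝ) (hc : ∀ i, 0 < c i)
    (C₂ : Matrix (Fin J) (Fin J) ℝ) (hC₂ : C₂.PosDef)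
    (hC₂sq : C₂ᵀ * C₂ = Matrix.diagonal c +
      (1/2 : ℝ) • (Matrix.vecMulVec r 1 + Matrix.vecMulVec 1 r))
    (x1 xstar sk ss : Fin J → ℝ)
    (h1pos : ∀ i, 0 ≤ x1 i)
    (h1feas : ∀ i, 0 ≤ ((Matrix.diagonal c + Matrix.vecMulVec r 1).mulVec x1 - sk + a) i)
    (h1comp : x1 ⬝ᵥ ((Matrix.diagonal c + Matrix.vecMulVec r 1).mulVec x1 - sk + a) = 0)
    (hspos : ∀ i, 0 ≤ xstar i)
    (hsfeas : ∀ i,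
      0 ≤ ((Matrix.diagonal c + Matrix.vecMulVec r 1).mulVec xstar - ss + a) i)
    (hscomp :
      xstar ⬝ᵥ ((Matrix.diagonal c + Matrix.vecMulVec r 1).mulVec xstar - ss + a) = 0) :
    sqnorm (C₂.mulVec (x1 - xstar)) ≤ spec C₂⁻¹ * sqnorm (sk - ss) :=
  stmt15_general c r a C₂ hC₂ hC₂sq x1 xstar sk ss h1pos h1feas h1comp hspos hsfeas hscomp
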